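/- The point (0,5) is a local minimizer of φ on F: there exists ε > 0 such that every x ∈ F with ‖x − (0,5)‖ < ε satisfies φ(x) ≥ φ(0,5) = 10. -/

import Mathlib

/-! Near `(0,5)` the second coordinate is positive, so the last constraint of `F` forces
`x₁ + x₂ ≥ 5`; then `4x₁ + 2x₂ = 2(x₁ + x₂) + 2x₁ ≥ 10`. -/

def Facad : Set (ℝ × ℝ) :=
  {x | 0 ≤ x.1 ∧ 0 ≤ x.2 ∧ 0 ≤ (x.1 + x.2 - 5 * Real.sqrt 2) * x.1 ∧
    0 ≤ (x.1 + x.2 - 5) * x.2}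

lemma Prod.snd_pos_of_norm_sub_lt {E : Type*} [SeminormedAddGroup E] {x y : E × ℝ}
    (h : ‖x - y‖ < y.2) : 0 < x.2 := by
  have hsnd : |x.2 - y.2| < y.2 := (norm_snd_le (x - y)).trans_lt h
  linarith [neg_abs_le (x.2 - y.2)]

lemma five_le_add_of_mem_Facad {x : ℝ × ℝ} (hx : x ∈ Facad) (hx₂ : 0 < x.2) :
    5 ≤ x.1 + x.2 := by
  have := nonneg_of_mul_nonneg_left hx.2.2.2 hx₂
  linarith

/-- `(0,5)` is a local minimizer of `φ(x) = 4x₁ + 2x₂` on `F`, with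
`φ(0,5) = 10`. -/
theorem academic_local_min :
    (4 * (0 : ℝ) + 2 * (5 : ℝ) = 10) ∧
    ∃ ε > (0 : ℝ), ∀ x ∈ Facad, ‖x - ((0 : ℝ), (5 : ℝ))‖ < ε →
      4 * (0 : ℝ) + 2 * (5 : ℝ) ≤ 4 * x.1 + 2 * x.2 := by
  refine ⟨by norm_num, 5, by norm_num, fun x hx hdist => ?_⟩
  have hx₂ : 0 < x.2 := Prod.snd_pos_of_norm_sub_lt hdist
  have hsum := five_le_add_of_mem_Facad hx hx₂
  linarith [hx.1]
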